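/- Let n, m be natural numbers with 2m ≤ n, let M be the real n×n matrix whose only nonzero entries are M_{2i−1,2i} = μ_i and M_{2i,2i−1} = −μ_i for 1 ≤ i ≤ m, and let A be a real diagonal n×n matrix with diagonal entries a₁,…,a_n. Fix 1 ≤ i ≤ m with μ_i ≠ 0 and 2m < j ≤ n, and let W_{ij} be the two-dimensional space spanned by w₁ := E_{2i−1,j} − E_{j,2i−1} and w₂ := E_{2i,j} − E_{j,2i}. Then the bilinear form (X,Y) ↦ Tr(M·(X·A·Y − Y·A·X)) restricted to W_{ij} is degenerate (i.e. some nonzero X ∈ W_{ij} pairs to zero with all Y ∈ W_{ij}) if and only if a_j = 0; moreover, when a_j = 0 the restricted form vanishes identically. -/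

import Mathlib

open Matrix

/-- The index `2i−1` (1-based), i.e. the first index of the `i`-th `2×2` block. -/
def idxA {n m : ℕ} (h : 2 * m ≤ n) (i : Fin m) : Fin n :=
  ⟨2 * i.val, by have := i.isLt; omega⟩

/-- The index `2i` (1-based), i.e. the second index of the `i`-th `2×2` block. -/
def idxB {n m : ℕ} (h : 2 * m ≤ n) (i : Fin m) : Fin n :=
  ⟨2 * i.val + 1, by have := i.isLt; omega⟩

/-- The block-diagonal skew-symmetric momentum matrix whose only nonzero entries are
`M_{2i−1,2i} = μ_i` and `M_{2i,2i−1} = −μ_i` for `1 ≤ i ≤ m`. -/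
def blockMom {n m : ℕ} (h : 2 * m ≤ n) (μ : Fin m → ℝ) : Matrix (Fin n) (Fin n) ℝ :=
  ∑ i : Fin m,
    (Matrix.single (idxA h i) (idxB h i) (μ i) -
      Matrix.single (idxB h i) (idxA h i) (μ i))

/-- The element `c₁·w₁ + c₂·w₂` of `W_{ij}`, where
`w₁ = E_{2i−1,j} − E_{j,2i−1}` and `w₂ = E_{2i,j} − E_{j,2i}`. -/
def wVec {n m : ℕ} (h : 2 * m ≤ n) (i : Fin m) (j : Fin n) (c : ℝ × ℝ) :
    Matrix (Fin n) (Fin n) ℝ :=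
  c.1 • (Matrix.single (idxA h i) j (1 : ℝ) -
      Matrix.single j (idxA h i) (1 : ℝ)) +
    c.2 • (Matrix.single (idxB h i) j (1 : ℝ) -
      Matrix.single j (idxB h i) (1 : ℝ))

/-! Write `p, q` for the indices `2i−1, 2i`. Since `j ∉ {p, q}`, a product of two matrix units of
`W_{ij}` survives only if it passes through `j`: it is then `a_j E_{xy}` with `x, y ∈ {p, q}`, or a
multiple of `E_{jj}`, which pairs with the zero entry `M_{jj}`. As `M_{pq} = −M_{qp} = μ_i`, the
pencil form on `W_{ij}` is `2 μ_i a_j (c₁d₂ − c₂d₁)`, a multiple of the nondegenerate area form of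
the plane. -/

theorem Matrix.single_mul_diagonal {n R : Type*} [Fintype n] [DecidableEq n]
    [NonUnitalNonAssocSemiring R] (x y : n) (c : R) (a : n → R) :
    single x y c * diagonal a = single x y (c * a y) := by
  ext u v
  by_cases hv : y = v
  · subst hv; simp [mul_diagonal, single_apply]
  · simp [mul_diagonal, hv]

section
variable {n m : ℕ} (h : 2 * m ≤ n)

lemma idxA_ne_idxB (k l : Fin m) : idxA h k ≠ idxB h l := by
  simp only [idxA, idxB, ne_eq, Fin.mk.injEq]; omega

lemma transpose_blockMom (μ : Fin m → ℝ) : (blockMom h μ)ᵀ = -blockMom h μ := by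
  simp [blockMom, transpose_sum, transpose_single]

lemma blockMom_apply_swap (μ : Fin m → ℝ) (x y : Fin n) :
    blockMom h μ y x = -blockMom h μ x y := by
  simpa using congr_fun (congr_fun (transpose_blockMom h μ) x) y

lemma blockMom_apply_self (μ : Fin m → ℝ) (x : Fin n) : blockMom h μ x x = 0 := by
  linarith [blockMom_apply_swap h μ x x]

lemma blockMom_apply_idxA_idxB (μ : Fin m → ℝ) (i : Fin m) :
    blockMom h μ (idxA h i) (idxB h i) = μ i := by
  rw [blockMom, Matrix.sum_apply, Finset.sum_eq_single i]
  · simp [single_apply_of_row_ne (idxA_ne_idxB h i i).symm]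
  · intro k _ hk
    have hki : k.val ≠ i.val := Fin.val_ne_of_ne hk
    rw [Matrix.sub_apply, single_apply_of_ne, single_apply_of_ne, sub_zero] <;>
      simp only [idxA, idxB, Fin.ext_iff] <;> omega
  · simp

lemma trace_blockMom_mul_wVec_commutator (μ : Fin m → ℝ) (a : Fin n → ℝ) (i : Fin m)
    (j : Fin n) (hj : 2 * m ≤ j.val) (c d : ℝ × ℝ) :
    (blockMom h μ *
        (wVec h i j c * diagonal a * wVec h i j d -
          wVec h i j d * diagonal a * wVec h i j c)).trace =
      2 * μ i * a j * (c.1 * d.2 - c.2 * d.1) := by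
  have hpj : idxA h i ≠ j := by simp only [idxA, ne_eq, Fin.ext_iff]; omega
  have hqj : idxB h i ≠ j := by simp only [idxB, ne_eq, Fin.ext_iff]; omega
  have hpq := idxA_ne_idxB h i i
  rw [trace_mul_comm]
  simp only [wVec, smul_sub, smul_single, smul_eq_mul, mul_one, add_mul, sub_mul, mul_add,
    mul_sub, single_mul_diagonal, single_mul_single_same,
    single_mul_single_of_ne _ _ _ _ hpq, single_mul_single_of_ne _ _ _ _ hpq.symm,
    single_mul_single_of_ne _ _ _ _ hpj, single_mul_single_of_ne _ _ _ _ hqj,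
    single_mul_single_of_ne _ _ _ _ hpj.symm, single_mul_single_of_ne _ _ _ _ hqj.symm,
    zero_mul, trace_add, trace_sub, trace_zero, trace_single_mul, smul_eq_mul,
    blockMom_apply_self, blockMom_apply_swap h μ (idxA h i) (idxB h i),
    blockMom_apply_idxA_idxB]
  ring
end

theorem exists_ne_zero_forall_mul_cross_eq_zero_iff {R : Type*} [CommRing R] [IsDomain R]
    (κ : R) : (∃ c : R × R, c ≠ 0 ∧ ∀ d : R × R, κ * (c.1 * d.2 - c.2 * d.1) = 0) ↔ κ = 0 := by
  constructor
  · rintro ⟨c, hc, hκc⟩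
    by_contra hκ
    have hc₁ : c.1 = 0 := by simpa [hκ] using hκc (0, 1)
    have hc₂ : c.2 = 0 := by simpa [hκ] using hκc (1, 0)
    exact hc (Prod.ext hc₁ hc₂)
  · rintro rfl
    exact ⟨(1, 0), by simp, fun d => zero_mul _⟩

/-- The pencil form `P_λ(X,Y) = Tr(M·(X·A·Y − Y·A·X))`, `A = diagonal a`, restricted to
the plane `W_{ij}` (`1 ≤ i ≤ m` with `μ_i ≠ 0`, `2m < j ≤ n`) is degenerate if and
only if `a_j = 0`; moreover when `a_j = 0` the restricted form vanishes identically. -/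
theorem Wij_degenerate_iff (n m : ℕ) (h : 2 * m ≤ n) (μ : Fin m → ℝ)
    (a : Fin n → ℝ) (i : Fin m) (hμ : μ i ≠ 0) (j : Fin n) (hj : 2 * m ≤ j.val) :
    ((∃ c : ℝ × ℝ, c ≠ 0 ∧ ∀ d : ℝ × ℝ,
        (blockMom h μ *
          (wVec h i j c * Matrix.diagonal a * wVec h i j d -
            wVec h i j d * Matrix.diagonal a * wVec h i j c)).trace = 0) ↔
      a j = 0) ∧
    (a j = 0 → ∀ c d : ℝ × ℝ,
      (blockMom h μ *
        (wVec h i j c * Matrix.diagonal a * wVec h i j d -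
          wVec h i j d * Matrix.diagonal a * wVec h i j c)).trace = 0) := by
  simp_rw [trace_blockMom_mul_wVec_commutator h μ a i j hj,
    exists_ne_zero_forall_mul_cross_eq_zero_iff, mul_eq_zero, hμ]
  refine ⟨by norm_num, fun haj c d => by simp [haj]⟩
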